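/- arXiv:math/0508599 — 2 statements merged into one kernel-verified Lean document; each statement's English description precedes it below -/
import Mathlib

section
/- Let ĝ ∈ ℝ^p and z ∈ ℝ^p with all zᵢ ≠ 0. Let k̂ minimize ave[(k − ĝ)²z²] over the cone K = {k ∈ ℝ^p : k₁ ≥ k₂ ≥ ⋯ ≥ k_p}, and let f̂ᵢ = max(k̂ᵢ, 0). Then f̂ minimizes ave[(f − ĝ)²z²] over F_MS = {f ∈ [0,1]^p : 1 ≥ f₁ ≥ f₂ ≥ ⋯ ≥ f_p ≥ 0}. -/
/-- If `k̂` minimizes `ave[(k − ĝ)²z²]` over the cone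
`K = {k : k₁ ≥ ⋯ ≥ k_p}` and `f̂ᵢ = max(k̂ᵢ, 0)`, then `f̂` minimizes
`ave[(f − ĝ)²z²]` over `F_MS = {f ∈ [0,1]^p : f₁ ≥ ⋯ ≥ f_p}`.
(Here each `ĝᵢ = (zᵢ² − σ̂²)/zᵢ² ≤ 1`.) -/
theorem positive_part_isotonic_minimizer (p : ℕ) (hp : 0 < p)
    (z g k : Fin p → ℝ) (hz : ∀ i, z i ≠ 0) (hg : ∀ i, g i ≤ 1)
    (hk_mono : ∀ i j : Fin p, i ≤ j → k j ≤ k i)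
    (hk_min : ∀ k' : Fin p → ℝ, (∀ i j : Fin p, i ≤ j → k' j ≤ k' i) →
      (p : ℝ)⁻¹ * ∑ i, (k i - g i) ^ 2 * (z i) ^ 2 ≤
        (p : ℝ)⁻¹ * ∑ i, (k' i - g i) ^ 2 * (z i) ^ 2) :
    (∀ i, 0 ≤ max (k i) 0 ∧ max (k i) 0 ≤ 1) ∧
    (∀ i j : Fin p, i ≤ j → max (k j) 0 ≤ max (k i) 0) ∧
    (∀ f : Fin p → ℝ, (∀ i, 0 ≤ f i ∧ f i ≤ 1) →
      (∀ i j : Fin p, i ≤ j → f j ≤ f i) →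
      (p : ℝ)⁻¹ * ∑ i, (max (k i) 0 - g i) ^ 2 * (z i) ^ 2 ≤
        (p : ℝ)⁻¹ * ∑ i, (f i - g i) ^ 2 * (z i) ^ 2) := by
  have hpinv : (0 : ℝ) < (p : ℝ)⁻¹ := by positivity
  -- Step 1: k i ≤ 1 for all i
  have hk1 : ∀ i, k i ≤ 1 := by
    by_contra h
    push_neg at h
    obtain ⟨i0, hi0⟩ := h
    have hmono : ∀ i j : Fin p, i ≤ j → min (k j) 1 ≤ min (k i) 1 := by
      intro i j hij
      exact min_le_min (hk_mono i j hij) le_rfl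
    have hkm := hk_min (fun i => min (k i) 1) hmono
    have hlt : ∑ i, (min (k i) 1 - g i) ^ 2 * (z i) ^ 2 <
        ∑ i, (k i - g i) ^ 2 * (z i) ^ 2 := by
      apply Finset.sum_lt_sum
      · intro i _
        rcases le_or_gt (k i) 1 with h1 | h1
        · rw [min_eq_left h1]
        · rw [min_eq_right h1.le]
          have hz2 : (0:ℝ) ≤ (z i)^2 := sq_nonneg _
          have hgi := hg i
          nlinarith [mul_nonneg hz2 (mul_nonneg (by linarith : (0:ℝ) ≤ k i - 1) (by linarith : (0:ℝ) ≤ k i + 1 - 2 * g i))]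
      · refine ⟨i0, Finset.mem_univ _, ?_⟩
        rw [min_eq_right hi0.le]
        have hz0 := hz i0
        have hz2 : (0:ℝ) < (z i0)^2 := by positivity
        have hgi := hg i0
        nlinarith [mul_pos hz2 (mul_pos (by linarith : (0:ℝ) < k i0 - 1) (by linarith : (0:ℝ) < k i0 + 1 - 2 * g i0))]
    have := mul_lt_mul_of_pos_left hlt hpinv
    linarith
  refine ⟨fun i => ⟨le_max_right _ _, max_le (hk1 i) zero_le_one⟩,
    fun i j hij => max_le_max (hk_mono i j hij) le_rfl, ?_⟩
  -- Step 2: main minimality claim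
  intro f hf hfmono
  set m : Fin p → ℝ := fun i => min (k i) 0 with hm
  have hmono' : ∀ i j : Fin p, i ≤ j → f j + m j ≤ f i + m i := by
    intro i j hij
    exact add_le_add (hfmono i j hij) (min_le_min (hk_mono i j hij) le_rfl)
  have key := hk_min (fun i => f i + m i) hmono'
  have hsum1 : ∑ i, (k i - g i) ^ 2 * (z i) ^ 2 ≤
      ∑ i, (f i + m i - g i) ^ 2 * (z i) ^ 2 :=
    le_of_mul_le_mul_left key hpinv
  have hkdecomp : ∀ i, k i = max (k i) 0 + m i := by
    intro i
    simp [hm, max_add_min]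
  have hsumA : ∑ i, (max (k i) 0 + m i - g i) ^ 2 * (z i) ^ 2 ≤
      ∑ i, (f i + m i - g i) ^ 2 * (z i) ^ 2 := by
    calc ∑ i, (max (k i) 0 + m i - g i) ^ 2 * (z i) ^ 2
        = ∑ i, (k i - g i) ^ 2 * (z i) ^ 2 := by
          apply Finset.sum_congr rfl; intro i _; rw [← hkdecomp i]
      _ ≤ _ := hsum1
  -- pointwise: (f+m-g)² z² - (f̂+m-g)² z² ≤ (f-g)² z² - (f̂-g)² z²
  have hterm : ∀ i ∈ Finset.univ, (f i + m i - g i) ^ 2 * (z i) ^ 2 -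
      (max (k i) 0 + m i - g i) ^ 2 * (z i) ^ 2 ≤
      (f i - g i) ^ 2 * (z i) ^ 2 - (max (k i) 0 - g i) ^ 2 * (z i) ^ 2 := by
    intro i _
    have hmn : m i * (f i - max (k i) 0) ≤ 0 := by
      rcases le_or_gt 0 (k i) with h0 | h0
      · simp [hm, min_eq_right h0]
      · have : m i = k i := by simp [hm, min_eq_left h0.le]
        rw [this, max_eq_right h0.le]
        have := (hf i).1
        nlinarith
    have hz2 : (0:ℝ) ≤ (z i)^2 := sq_nonneg _
    nlinarith [mul_nonpos_of_nonpos_of_nonneg (mul_nonpos_of_nonpos_of_nonneg hmn hz2 : m i * (f i - max (k i) 0) * (z i)^2 ≤ 0) (by norm_num : (0:ℝ) ≤ 2)]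
  have hsum2 := Finset.sum_le_sum hterm
  rw [Finset.sum_sub_distrib, Finset.sum_sub_distrib] at hsum2
  have : ∑ i, (max (k i) 0 - g i) ^ 2 * (z i) ^ 2 ≤
      ∑ i, (f i - g i) ^ 2 * (z i) ^ 2 := by linarith
  exact mul_le_mul_of_nonneg_left this hpinv.le
end

section
/- If z ∼ N(ξ, σ²) (scalar) and t ≥ 0, then E[(sgn(z)·max(|z|−t,0) − ξ)²] = σ²(1 − 2P(|z| ≤ t)) + E[min(z², t²)]. (Stein's unbiased risk formula for soft thresholding.) -/
open MeasureTheory ProbabilityTheory Set Filter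
open scoped NNReal Topology

/-! Let `c z = max (-t) (min z t)` be the clamp of `z` to `[-t, t]`. Soft thresholding is
`z - c z` and `c z ^ 2 = min (z ^ 2) (t ^ 2)`, so the risk expands as
`E (z - ξ)² - 2 E [c z (z - ξ)] + E [min (z², t²)]`. The cross term is Stein's identity
`E [c z (z - ξ)] = σ² E [c' z] = σ² P (|z| ≤ t)`: since `(x - ξ) φ = -(σ² φ)'` for the density `φ`,
integrating by parts against the piecewise linear `c` on `(-∞, -t]`, `[-t, t]`, `(t, ∞)` leaves
`σ² ∫ φ` over `[-t, t]`. -/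

lemma sq_max_neg_min {t : ℝ} (ht : 0 ≤ t) (z : ℝ) :
    max (-t) (min z t) ^ 2 = min (z ^ 2) (t ^ 2) := by
  rcases le_total z (-t) with h | h
  · rw [min_eq_left (by linarith), max_eq_left h, min_eq_right (by nlinarith)]
    ring
  rcases le_total z t with h' | h'
  · rw [min_eq_left h', max_eq_right h, min_eq_left (by nlinarith)]
  · rw [min_eq_right h', max_eq_right (by linarith), min_eq_right (by nlinarith)]

lemma sign_mul_max_abs_sub_eq_sub_max_neg_min {t : ℝ} (ht : 0 ≤ t) (z : ℝ) :
    Real.sign z * max (|z| - t) 0 = z - max (-t) (min z t) := by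
  rcases lt_trichotomy z 0 with h | rfl | h
  · rw [Real.sign_of_neg h, abs_of_neg h, min_eq_left (by linarith)]
    rcases le_total z (-t) with h' | h'
    · rw [max_eq_left (by linarith), max_eq_left h']
      ring
    · rw [max_eq_right (by linarith), max_eq_right h']
      ring
  · simp [ht]
  · rw [Real.sign_of_pos h, abs_of_pos h, max_eq_right (le_min (by linarith) (by linarith))]
    rcases le_total z t with h' | h'
    · rw [min_eq_left h', max_eq_right (by linarith)]
      ring
    · rw [min_eq_right h', max_eq_left (by linarith)]
      ring

lemma MeasureTheory.Integrable.max_min_mul {μ : Measure ℝ} {g : ℝ → ℝ} (hg : Integrable g μ)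
    (a b : ℝ) : Integrable (fun x => max a (min x b) * g x) μ :=
  hg.bdd_mul (c := max |a| |b|) (by fun_prop) (ae_of_all _ fun x => by
    have h_le : max a (min x b) ≤ max a b := max_le_max le_rfl (min_le_right _ _)
    rw [Real.norm_eq_abs, abs_le]
    exact ⟨by linarith [neg_abs_le a, le_max_left |a| |b|, le_max_left a (min x b)],
      h_le.trans (max_le_max (le_abs_self a) (le_abs_self b))⟩)

lemma integral_max_min_mul_eq_neg_intervalIntegral {G g : ℝ → ℝ}
    (hG : ∀ x, HasDerivAt G (g x) x) (hg : Integrable g)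
    (hG_bot : Tendsto G atBot (𝓝 0)) (hG_top : Tendsto G atTop (𝓝 0)) {a b : ℝ} (hab : a ≤ b) :
    ∫ x, max a (min x b) * g x = -∫ x in a..b, G x := by
  have hint := hg.max_min_mul a b
  have h_low : ∫ x in Iic a, max a (min x b) * g x = a * G a := by
    rw [setIntegral_congr_fun measurableSet_Iic (g := fun x => a * g x) fun x (hx : x ≤ a) => by
        rw [min_eq_left (hx.trans hab), max_eq_left hx],
      integral_const_mul, integral_Iic_of_hasDerivAt_of_tendsto' (fun x _ => hG x) hg.integrableOn
        hG_bot, sub_zero]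
  have h_high : ∫ x in Ioi b, max a (min x b) * g x = -(b * G b) := by
    rw [setIntegral_congr_fun measurableSet_Ioi (g := fun x => b * g x) fun x (hx : b < x) => by
        rw [min_eq_right hx.le, max_eq_right hab],
      integral_const_mul, integral_Ioi_of_hasDerivAt_of_tendsto' (fun x _ => hG x) hg.integrableOn
        hG_top, zero_sub, mul_neg]
  have h_mid : ∫ x in a..b, max a (min x b) * g x = b * G b - a * G a - ∫ x in a..b, G x := by
    rw [intervalIntegral.integral_congr (g := fun x => x * g x) fun x hx => by
      rw [uIcc_of_le hab] at hx
      simp only [min_eq_left hx.2, max_eq_right hx.1]]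
    simpa using intervalIntegral.integral_mul_deriv_eq_deriv_mul (fun x _ => hasDerivAt_id x)
      (fun x _ => hG x) intervalIntegrable_const hg.intervalIntegrable
  rw [← intervalIntegral.integral_Iic_add_Ioi hint.integrableOn hint.integrableOn]
  rw [← intervalIntegral.integral_Iic_sub_Iic hint.integrableOn hint.integrableOn] at h_mid
  linarith

namespace ProbabilityTheory

variable {μ : ℝ} {v : ℝ≥0}

lemma hasDerivAt_neg_mul_gaussianPDFReal (x : ℝ) :
    HasDerivAt (fun y => -(v : ℝ) * gaussianPDFReal μ v y)
      ((x - μ) * gaussianPDFReal μ v x) x := by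
  rcases eq_or_ne v 0 with rfl | hv
  · simpa [gaussianPDFReal_zero_var] using hasDerivAt_const x (0 : ℝ)
  have hv' : (v : ℝ) ≠ 0 := by exact_mod_cast hv
  have h_exp : HasDerivAt (fun y => -(y - μ) ^ 2 / (2 * v)) (-(x - μ) / v) x :=
    ((((hasDerivAt_id' x).sub_const μ).fun_pow 2).fun_neg.div_const _).congr_deriv
      (by field_simp; ring)
  exact ((h_exp.exp.const_mul (√(2 * Real.pi * v))⁻¹).const_mul (-(v : ℝ))).congr_deriv
    (by rw [gaussianPDFReal]; field_simp)

lemma integrable_gaussianReal_iff (hv : v ≠ 0) {f : ℝ → ℝ} :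
    Integrable f (gaussianReal μ v) ↔ Integrable fun x => gaussianPDFReal μ v x * f x := by
  rw [gaussianReal_of_var_ne_zero μ hv, gaussianPDF_def,
    integrable_withDensity_iff_integrable_smul' (measurable_gaussianPDFReal μ v).ennreal_ofReal
      (ae_of_all _ fun _ => ENNReal.ofReal_lt_top)]
  simp [ENNReal.toReal_ofReal (gaussianPDFReal_nonneg μ v _)]

lemma integrable_sub_mul_gaussianPDFReal (hv : v ≠ 0) :
    Integrable fun x => (x - μ) * gaussianPDFReal μ v x := by
  have h : Integrable (fun x => x - μ) (gaussianReal μ v) :=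
    ((memLp_id_gaussianReal 1).integrable le_rfl).sub (integrable_const μ)
  simpa only [mul_comm] using (integrable_gaussianReal_iff hv).mp h

lemma integral_sub_sq_gaussianReal : ∫ x, (x - μ) ^ 2 ∂gaussianReal μ v = v := by
  rw [← variance_fun_id_gaussianReal, variance_eq_integral measurable_id'.aemeasurable,
    integral_id_gaussianReal]

lemma integral_max_min_mul_sub_gaussianReal {a b : ℝ} (hab : a ≤ b) :
    ∫ x, max a (min x b) * (x - μ) ∂gaussianReal μ v = v * (gaussianReal μ v (Icc a b)).toReal := by
  rcases eq_or_ne v 0 with rfl | hv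
  · simp [gaussianReal_zero_var]
  set G := fun y => -(v : ℝ) * gaussianPDFReal μ v y
  have hG (x : ℝ) := hasDerivAt_neg_mul_gaussianPDFReal (μ := μ) (v := v) x
  have hg := integrable_sub_mul_gaussianPDFReal (μ := μ) hv
  have hG_int : Integrable G := (integrable_gaussianPDFReal μ v).const_mul _
  have hG_top : Tendsto G atTop (𝓝 0) := tendsto_zero_of_hasDerivAt_of_integrableOn_Ioi
    (a := 0) (fun x _ => hG x) hg.integrableOn hG_int.integrableOn
  have hG_bot : Tendsto G atBot (𝓝 0) := tendsto_zero_of_hasDerivAt_of_integrableOn_Iic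
    (a := 0) (fun x _ => hG x) hg.integrableOn hG_int.integrableOn
  rw [integral_gaussianReal_eq_integral_smul hv, gaussianReal_apply_eq_integral μ hv,
    ENNReal.toReal_ofReal (setIntegral_nonneg measurableSet_Icc
      fun x _ => gaussianPDFReal_nonneg μ v x),
    integral_Icc_eq_integral_Ioc, ← intervalIntegral.integral_of_le hab]
  calc ∫ x, gaussianPDFReal μ v x • (max a (min x b) * (x - μ))
      = ∫ x, max a (min x b) * ((x - μ) * gaussianPDFReal μ v x) := by
        congr with x
        rw [smul_eq_mul]
        ring
    _ = -∫ x in a..b, G x := integral_max_min_mul_eq_neg_intervalIntegral hG hg hG_bot hG_top hab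
    _ = v * ∫ x in a..b, gaussianPDFReal μ v x := by
        simp only [G, neg_mul, intervalIntegral.integral_neg, neg_neg,
          intervalIntegral.integral_const_mul]

end ProbabilityTheory

open ProbabilityTheory

/-- Stein's unbiased risk formula for soft thresholding:
if `z ∼ N(ξ, σ²)` and `t ≥ 0`, then
`E[(sgn(z)·max(|z|−t,0) − ξ)²] = σ²(1 − 2P(|z| ≤ t)) + E[min(z², t²)]`. -/
theorem sure_soft_threshold (ξ : ℝ) (v : ℝ≥0) (t : ℝ) (ht : 0 ≤ t) :
    ∫ z, (Real.sign z * max (|z| - t) 0 - ξ) ^ 2 ∂(gaussianReal ξ v) =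
      (v : ℝ) * (1 - 2 * ((gaussianReal ξ v) {z : ℝ | |z| ≤ t}).toReal) +
        ∫ z, min (z ^ 2) (t ^ 2) ∂(gaussianReal ξ v) := by
  have h_expand (z : ℝ) : (Real.sign z * max (|z| - t) 0 - ξ) ^ 2
      = (z - ξ) ^ 2 - 2 * (max (-t) (min z t) * (z - ξ)) + min (z ^ 2) (t ^ 2) := by
    rw [sign_mul_max_abs_sub_eq_sub_max_neg_min ht, ← sq_max_neg_min ht]
    ring
  have h_sq : Integrable (fun z => (z - ξ) ^ 2) (gaussianReal ξ v) :=
    ((memLp_id_gaussianReal 2).sub (memLp_const ξ)).integrable_sq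
  have h_cross : Integrable (fun z => max (-t) (min z t) * (z - ξ)) (gaussianReal ξ v) :=
    (((memLp_id_gaussianReal 1).integrable le_rfl).sub (integrable_const ξ)).max_min_mul (-t) t
  have h_main : Integrable (fun z => (z - ξ) ^ 2 - 2 * (max (-t) (min z t) * (z - ξ)))
      (gaussianReal ξ v) := h_sq.sub (h_cross.const_mul 2)
  have h_min : Integrable (fun z => min (z ^ 2) (t ^ 2)) (gaussianReal ξ v) :=
    Integrable.of_bound (by fun_prop) (t ^ 2) (ae_of_all _ fun z => by
      rw [Real.norm_of_nonneg (by positivity)]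
      exact min_le_right _ _)
  have h_ball : {z : ℝ | |z| ≤ t} = Icc (-t) t := by
    ext z
    simp [abs_le]
  simp_rw [h_expand]
  rw [integral_add h_main h_min, integral_sub h_sq (h_cross.const_mul 2),
    integral_const_mul, integral_sub_sq_gaussianReal,
    integral_max_min_mul_sub_gaussianReal (neg_le_self ht), h_ball]
  ring
end
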